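/- arXiv:2603.28036 — 2 statements merged into one kernel-verified Lean document; each statement's English description precedes it below -/
import Mathlib

section
/- Let L be any of the modal systems K_nD, D_nD, T_nD, K45_nD, KD45_nD, S5_nD. For every finite P ⊆ 𝒫, every atom p ∈ P, every L-satisfiable formula φ over P, and every L-satisfiable formula ψ over P∖{p}: if ψ is a result of forgetting p in φ in L (dforget_L(φ,p) ≡_L ψ), then ψ is a uniform interpolant of φ in L over P∖{p}. Consequently, if L is closed under forgetting, then L has the uniform interpolation property. -/
/-!
Common framework: multi-agent epistemic modal logic with distributed knowledge.
Agents are `Fin n`, atoms are natural numbers.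
-/

namespace DKLogic

/-- Formulas of the language `L_D`: atoms, negation, conjunction, disjunction and the
distributed-knowledge modality `D_B` for nonempty sets `B` of agents (together with the
constants `⊤`/`⊥`, which the paper uses as the empty conjunction/disjunction). -/
inductive Formula (n : ℕ) : Type
  | top : Formula n
  | bot : Formula n
  | atom : ℕ → Formula n
  | neg : Formula n → Formula n
  | and : Formula n → Formula n → Formula n
  | or : Formula n → Formula n → Formula n
  | D : {B : Finset (Fin n) // B.Nonempty} → Formula n → Formula n

namespace Formula

/-- Modal depth of a formula. -/
def depth {n : ℕ} : Formula n → ℕ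
  | top => 0
  | bot => 0
  | atom _ => 0
  | neg φ => depth φ
  | and φ ψ => max (depth φ) (depth ψ)
  | or φ ψ => max (depth φ) (depth ψ)
  | D _ φ => depth φ + 1

/-- The atoms occurring in a formula. -/
def atoms {n : ℕ} : Formula n → Finset ℕ
  | top => ∅
  | bot => ∅
  | atom q => {q}
  | neg φ => atoms φ
  | and φ ψ => atoms φ ∪ atoms ψ
  | or φ ψ => atoms φ ∪ atoms ψ
  | D _ φ => atoms φ

end Formula

/-- A Kripke model over world type `W` with `n` agents. -/
structure KModel (n : ℕ) (W : Type) where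
  R : Fin n → W → W → Prop
  V : W → Set ℕ

/-- The distributed accessibility relation `R_B = ⋂_{i ∈ B} R_i`. -/
def KModel.RB {n : ℕ} {W : Type} (M : KModel n W) (B : Finset (Fin n)) (s t : W) : Prop :=
  ∀ i ∈ B, M.R i s t

/-- Satisfaction. -/
def Sat {n : ℕ} {W : Type} (M : KModel n W) : W → Formula n → Prop
  | _, .top => True
  | _, .bot => False
  | s, .atom q => q ∈ M.V s
  | s, .neg φ => ¬ Sat M s φ
  | s, .and φ ψ => Sat M s φ ∧ Sat M s ψ
  | s, .or φ ψ => Sat M s φ ∨ Sat M s ψ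
  | s, .D B φ => ∀ t : W, M.RB B.1 s t → Sat M t φ

/-- Seriality of a relation. -/
def Serial {W : Type} (R : W → W → Prop) : Prop := ∀ x, ∃ y, R x y

/-- Euclideanness of a relation. -/
def Euclidean {W : Type} (R : W → W → Prop) : Prop := ∀ x y z, R x y → R x z → R y z

/-- The six modal systems. -/
inductive MSys : Type
  | K | D | T | K45 | KD45 | S5

/-- `L`-models: frame conditions on each accessibility relation for each system. -/
def IsModel {n : ℕ} {W : Type} : MSys → KModel n W → Prop
  | .K, _ => True
  | .D, M => ∀ i, Serial (M.R i)
  | .T, M => ∀ i, Reflexive (M.R i)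
  | .K45, M => ∀ i, Transitive (M.R i) ∧ Euclidean (M.R i)
  | .KD45, M => ∀ i, Serial (M.R i) ∧ Transitive (M.R i) ∧ Euclidean (M.R i)
  | .S5, M => ∀ i, Reflexive (M.R i) ∧ Transitive (M.R i) ∧ Euclidean (M.R i)

/-- Semantic consequence over `L`-models. -/
def Entails {n : ℕ} (L : MSys) (φ ψ : Formula n) : Prop :=
  ∀ (W : Type) (M : KModel n W), IsModel L M → ∀ s : W, Sat M s φ → Sat M s ψ

/-- Semantic equivalence over `L`-models. -/
def EquivL {n : ℕ} (L : MSys) (φ ψ : Formula n) : Prop :=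
  Entails L φ ψ ∧ Entails L ψ φ

/-- `L`-satisfiability. -/
def SatL {n : ℕ} (L : MSys) (φ : Formula n) : Prop :=
  ∃ (W : Type) (M : KModel n W) (s : W), IsModel L M ∧ Sat M s φ

/-- Collective `p`-bisimulation between two pointed models. -/
def CollPBisim {n : ℕ} {W W' : Type} (M : KModel n W) (s : W) (M' : KModel n W') (s' : W')
    (p : ℕ) : Prop :=
  ∃ ρ : W → W' → Prop, ρ s s' ∧
    ∀ u u', ρ u u' →
      ((∀ q : ℕ, q ≠ p → (q ∈ M.V u ↔ q ∈ M'.V u')) ∧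
       (∀ B : Finset (Fin n), B.Nonempty → ∀ v, M.RB B u v → ∃ v', M'.RB B u' v' ∧ ρ v v') ∧
       (∀ B : Finset (Fin n), B.Nonempty → ∀ v', M'.RB B u' v' → ∃ v, M.RB B u v ∧ ρ v v'))

/-- `ψ` is a result of forgetting `p` in `φ` in system `L`
(written `dforget_L(φ,p) ≡_L ψ` in the paper). -/
def IsForget {n : ℕ} (L : MSys) (φ : Formula n) (p : ℕ) (ψ : Formula n) : Prop :=
  ψ.atoms ⊆ φ.atoms.erase p ∧
  (∀ (W W' : Type) (M : KModel n W) (M' : KModel n W') (s : W) (s' : W'),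
      IsModel L M → IsModel L M' → Sat M s φ → CollPBisim M s M' s' p → Sat M' s' ψ) ∧
  (∀ (W' : Type) (M' : KModel n W') (s' : W'),
      IsModel L M' → Sat M' s' ψ →
      ∃ (W : Type) (M : KModel n W) (s : W), IsModel L M ∧ Sat M s φ ∧ CollPBisim M s M' s' p)

/-- `L` is closed under forgetting: `dforget_L(φ,p)` exists (as an `L`-satisfiable formula)
for every `L`-satisfiable `φ` and every atom `p`. -/
def ClosedUnderForgetting {n : ℕ} (L : MSys) : Prop :=
  ∀ (φ : Formula n) (p : ℕ), SatL L φ → ∃ ψ : Formula n, SatL L ψ ∧ IsForget L φ p ψ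

/-- `ψ` is a uniform interpolant of `φ` in `L` over `P \ {p}`. -/
def IsUI {n : ℕ} (L : MSys) (P : Finset ℕ) (p : ℕ) (φ ψ : Formula n) : Prop :=
  SatL L ψ ∧ ψ.atoms ⊆ P.erase p ∧
  ∀ χ : Formula n, p ∉ χ.atoms → (Entails L φ χ ↔ Entails L ψ χ)

/-- The uniform interpolation property for the system `L`. -/
def HasUIP {n : ℕ} (L : MSys) : Prop :=
  ∀ (P : Finset ℕ) (p : ℕ) (φ : Formula n),
    p ∈ P → φ.atoms ⊆ P → SatL L φ → ∃ ψ : Formula n, IsUI L P p φ ψ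

/-! ### Canonical formulas -/

/-- Big conjunction of a list of formulas (`⊤` for the empty list). -/
def bigAnd {n : ℕ} : List (Formula n) → Formula n
  | [] => .top
  | φ :: l => .and φ (bigAnd l)

/-- Big disjunction of a list of formulas (`⊥` for the empty list). -/
def bigOr {n : ℕ} : List (Formula n) → Formula n
  | [] => .bot
  | φ :: l => .or φ (bigOr l)

/-- An injective numerical code of formulas, used to fix a canonical ordering. -/
def fcode {n : ℕ} : Formula n → ℕ
  | .top => Nat.pair 0 0
  | .bot => Nat.pair 1 0
  | .atom q => Nat.pair 2 q
  | .neg φ => Nat.pair 3 (fcode φ)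
  | .and φ ψ => Nat.pair 4 (Nat.pair (fcode φ) (fcode ψ))
  | .or φ ψ => Nat.pair 5 (Nat.pair (fcode φ) (fcode ψ))
  | .D B φ => Nat.pair 6 (Nat.pair (B.1.sum fun i => 2 ^ (i : ℕ)) (fcode φ))

/-- Insert a formula into a strictly `fcode`-sorted list (dropping duplicates). -/
def insertF {n : ℕ} (φ : Formula n) : List (Formula n) → List (Formula n)
  | [] => [φ]
  | ψ :: l =>
      if fcode φ < fcode ψ then φ :: ψ :: l
      else if fcode φ = fcode ψ then ψ :: l
      else ψ :: insertF φ l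

/-- The canonical (sorted, duplicate-free) list representing the set of formulas in `l`. -/
def normList {n : ℕ} (l : List (Formula n)) : List (Formula n) := l.foldr insertF []

/-- The minterm of `P` that is positive exactly on `S`. -/
def minterm {n : ℕ} (P S : Finset ℕ) : Formula n :=
  bigAnd ((P.sort (· ≤ ·)).map fun q =>
    if q ∈ S then Formula.atom q else Formula.neg (Formula.atom q))

/-- The subset of `Fin n` whose characteristic bits are those of `m`. -/
def natToFinset (n m : ℕ) : Finset (Fin n) :=
  Finset.univ.filter fun i => m.testBit (i : ℕ)

/-- A canonical enumeration of all nonempty subsets of the agent set. -/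
def neSubsets (n : ℕ) : List {B : Finset (Fin n) // B.Nonempty} :=
  ((List.range (2 ^ n)).map (natToFinset n)).filterMap fun B =>
    if h : B.Nonempty then some ⟨B, h⟩ else none

/-- `∇_B Φ = D_B (⋁Φ) ∧ ⋀_{φ ∈ Φ} ¬ D_B ¬ φ`. -/
def nabla {n : ℕ} (B : {B : Finset (Fin n) // B.Nonempty}) (Φ : List (Formula n)) : Formula n :=
  Formula.and (Formula.D B (bigOr Φ))
    (bigAnd (Φ.map fun φ => Formula.neg (Formula.D B (Formula.neg φ))))

/-- Underlying data of a d-canonical formula: a set of (positive) atoms together with,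
for every set `B` of agents, a list of successor data. -/
inductive CData (n : ℕ) : Type
  | mk (S : Finset ℕ) (succ : Finset (Fin n) → List (CData n)) : CData n

/-- The positive-atom component. -/
def CData.S {n : ℕ} : CData n → Finset ℕ
  | mk S _ => S

/-- The `B`-successor data. -/
def CData.succ {n : ℕ} : CData n → Finset (Fin n) → List (CData n)
  | mk _ f => f

/-- The d-canonical formula of depth `k` over `P` determined by the data `d`:
`δ_0 ∧ ⋀_{B} ∇_B Φ_B`. -/
def toFormula {n : ℕ} (P : Finset ℕ) : ℕ → CData n → Formula n
  | 0, d => minterm P (d.S ∩ P)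
  | (k+1), d =>
      Formula.and (minterm P (d.S ∩ P))
        (bigAnd ((neSubsets n).map fun B =>
          nabla B (normList ((d.succ B.1).map fun c => toFormula P k c))))

/-- `D^P_k`: the set of d-canonical formulas of depth `k` over `P`. -/
def DP {n : ℕ} (P : Finset ℕ) (k : ℕ) : Set (Formula n) := Set.range (toFormula P k)

/-- `R_B(δ)` for `δ` the level-`k` canonical formula with data `d`:
the set of `B`-successor canonical formulas (of level `k - 1`). -/
def RBset {n : ℕ} (P : Finset ℕ) (k : ℕ) (d : CData n) (B : Finset (Fin n)) :
    Set (Formula n) :=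
  {φ | ∃ c ∈ d.succ B, φ = toFormula P (k - 1) c}

/-- One pruning step `δ ↦ δ^↓` on data (first argument: the level of the input). -/
def downD {n : ℕ} : ℕ → CData n → CData n
  | 0, d => d
  | 1, d => CData.mk d.S (fun _ => [])
  | (k+2), d => CData.mk d.S (fun B => (d.succ B).map fun c => downD (k+1) c)

/-- `l`-fold pruning `δ ↦ δ^{↓l}` on data (first argument: the level of the input). -/
def downIter {n : ℕ} : ℕ → ℕ → CData n → CData n
  | _, 0, d => d
  | k, (l+1), d => downIter (k-1) l (downD k d)

/-- Truncation `δ ↦ δ^{↑l}` on data (first argument: the level of the input). -/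
def upD {n : ℕ} : ℕ → ℕ → CData n → CData n
  | _, 0, d => CData.mk d.S (fun _ => [])
  | 0, (_+1), d => d
  | (k+1), (l+1), d => CData.mk d.S (fun B => (d.succ B).map fun c => upD k l c)

/-- The canonical formula `δ` of level `k` with data `d`. -/
def cf {n : ℕ} (P : Finset ℕ) (k : ℕ) (d : CData n) : Formula n := toFormula P k d

/-- `δ^{↓l}` (a canonical formula of level `k - l`). -/
def cfDown {n : ℕ} (P : Finset ℕ) (k l : ℕ) (d : CData n) : Formula n :=
  toFormula P (k - l) (downIter k l d)

/-- `δ^{↑l}` (a canonical formula of level `min k l`). -/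
def cfUp {n : ℕ} (P : Finset ℕ) (k l : ℕ) (d : CData n) : Formula n :=
  toFormula P (min k l) (upD k l d)

/-- Literal elimination: `φ^p` replaces every occurrence of `¬p` by `⊤` and subsequently
every remaining occurrence of `p` by `⊤`. -/
def elim {n : ℕ} (p : ℕ) : Formula n → Formula n
  | .top => .top
  | .bot => .bot
  | .atom q => if q = p then .top else .atom q
  | .neg (.atom q) => if q = p then .top else .neg (.atom q)
  | .neg φ => .neg (elim p φ)
  | .and φ ψ => .and (elim p φ) (elim p ψ)
  | .or φ ψ => .or (elim p φ) (elim p ψ)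
  | .D B φ => .D B (elim p φ)


/-!
Forth, applied to the identity bisimulation, gives `φ ⊨ ψ`. Conversely, every model of `ψ`
is collectively `p`-bisimilar to a model of `φ` (Back), and such bisimulations preserve the
truth of `p`-free formulas, so every `p`-free consequence of `φ` is one of `ψ`.
-/

def IsCollPBisimRel {n : ℕ} {W W' : Type} (M : KModel n W) (M' : KModel n W') (p : ℕ)
    (ρ : W → W' → Prop) : Prop :=
  ∀ u u', ρ u u' →
    ((∀ q : ℕ, q ≠ p → (q ∈ M.V u ↔ q ∈ M'.V u')) ∧
     (∀ B : Finset (Fin n), B.Nonempty → ∀ v, M.RB B u v → ∃ v', M'.RB B u' v' ∧ ρ v v') ∧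
     (∀ B : Finset (Fin n), B.Nonempty → ∀ v', M'.RB B u' v' → ∃ v, M.RB B u v ∧ ρ v v'))

theorem IsCollPBisimRel.sat_iff {n : ℕ} {W W' : Type} {M : KModel n W} {M' : KModel n W'}
    {p : ℕ} {ρ : W → W' → Prop} (hρ : IsCollPBisimRel M M' p ρ) {χ : Formula n}
    (hp : p ∉ χ.atoms) {u : W} {u' : W'} (hu : ρ u u') : Sat M u χ ↔ Sat M' u' χ := by
  induction χ generalizing u u' with
  | top | bot => exact Iff.rfl
  | atom q =>
    refine (hρ u u' hu).1 q ?_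
    rintro rfl
    exact hp (Finset.mem_singleton_self q)
  | neg φ ih => exact not_congr (ih hp hu)
  | and φ ψ ihφ ihψ =>
    simp only [Formula.atoms, Finset.mem_union, not_or] at hp
    exact and_congr (ihφ hp.1 hu) (ihψ hp.2 hu)
  | or φ ψ ihφ ihψ =>
    simp only [Formula.atoms, Finset.mem_union, not_or] at hp
    exact or_congr (ihφ hp.1 hu) (ihψ hp.2 hu)
  | D B φ ih =>
    constructor
    · intro h t' ht'
      obtain ⟨t, ht, hρt⟩ := (hρ u u' hu).2.2 B.1 B.2 t' ht'
      exact (ih hp hρt).mp (h t ht)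
    · intro h t ht
      obtain ⟨t', ht', hρt⟩ := (hρ u u' hu).2.1 B.1 B.2 t ht
      exact (ih hp hρt).mpr (h t' ht')

theorem CollPBisim.sat_iff {n : ℕ} {W W' : Type} {M : KModel n W} {M' : KModel n W'}
    {s : W} {s' : W'} {p : ℕ} (h : CollPBisim M s M' s' p) {χ : Formula n}
    (hp : p ∉ χ.atoms) : Sat M s χ ↔ Sat M' s' χ :=
  let ⟨_, hs, hρ⟩ := h
  IsCollPBisimRel.sat_iff hρ hp hs

theorem collPBisim_refl {n : ℕ} {W : Type} (M : KModel n W) (s : W) (p : ℕ) :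
    CollPBisim M s M s p :=
  ⟨Eq, rfl, by
    rintro u _ rfl
    exact ⟨fun _ _ => Iff.rfl, fun _ _ v hv => ⟨v, hv, rfl⟩, fun _ _ v hv => ⟨v, hv, rfl⟩⟩⟩

theorem IsForget.entails {n : ℕ} {L : MSys} {φ ψ : Formula n} {p : ℕ}
    (h : IsForget L φ p ψ) : Entails L φ ψ :=
  fun W M hM s hφ => h.2.1 W W M M s s hM hM hφ (collPBisim_refl M s p)

theorem IsForget.entails_iff {n : ℕ} {L : MSys} {φ ψ : Formula n} {p : ℕ}
    (h : IsForget L φ p ψ) {χ : Formula n} (hp : p ∉ χ.atoms) :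
    Entails L φ χ ↔ Entails L ψ χ := by
  refine ⟨fun hφχ W' M' hM' s' hψ => ?_,
    fun hψχ W M hM s hφ => hψχ W M hM s (h.entails W M hM s hφ)⟩
  obtain ⟨W, M, s, hM, hφ, hbisim⟩ := h.2.2 W' M' s' hM' hψ
  exact (hbisim.sat_iff hp).mp (hφχ W M hM s hφ)

theorem IsForget.isUI {n : ℕ} {L : MSys} {P : Finset ℕ} {p : ℕ} {φ ψ : Formula n}
    (h : IsForget L φ p ψ) (hψ : SatL L ψ) (hφP : φ.atoms ⊆ P) : IsUI L P p φ ψ :=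
  ⟨hψ, h.1.trans (Finset.erase_subset_erase p hφP), fun _ hp => h.entails_iff hp⟩

theorem ClosedUnderForgetting.hasUIP {n : ℕ} {L : MSys}
    (h : ClosedUnderForgetting (n := n) L) : HasUIP (n := n) L := by
  intro P p φ _ hφP hφ
  obtain ⟨ψ, hψ, hforget⟩ := h φ p hφ
  exact ⟨ψ, hforget.isUI hψ hφP⟩

/-- a result of forgetting is a uniform interpolant; consequently
closure under forgetting implies the uniform interpolation property. -/
theorem forget_is_uniform_interpolant {n : ℕ} (L : MSys) :
    (∀ (P : Finset ℕ) (p : ℕ) (φ ψ : Formula n),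
        p ∈ P → φ.atoms ⊆ P → SatL L φ →
        ψ.atoms ⊆ P.erase p → SatL L ψ →
        IsForget L φ p ψ → IsUI L P p φ ψ) ∧
    (ClosedUnderForgetting (n := n) L → HasUIP (n := n) L) :=
  ⟨fun _ _ _ _ _ hφP _ _ hψ hforget => hforget.isUI hψ hφP, ClosedUnderForgetting.hasUIP⟩

end DKLogic
end

section
/- (Dichotomy for d-canonical formulas) Let L be any of the modal systems K_nD, D_nD, T_nD, K45_nD, KD45_nD, S5_nD, let P ⊆ 𝒫 be finite, k ∈ ℕ, and δ ∈ D^P_k(L). Let φ be a formula of L_D with modal depth at most k and all of whose atoms lie in P. Then either δ ⊨_L φ or δ ⊨_L ¬φ. -/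
/-!
Common framework: multi-agent epistemic modal logic with distributed knowledge.
Agents are `Fin n`, atoms are natural numbers.
-/

namespace DKLogic

/-!
A d-canonical formula `δ` of depth `k` over `P` fixes everything a formula of depth at most `k`
over `P` can say: its minterm fixes the atoms, and each conjunct `∇_B Φ_B` says that every
`B`-successor satisfies some member of `Φ_B` and every member of `Φ_B` is realised by some
`B`-successor. Since the members of `Φ_B` are themselves d-canonical of depth `k - 1`, induction on
the formula shows that any two pointed models of `δ` agree on it. So if one `L`-model of `δ`
refutes `φ`, all of them do.
-/

section Semantics

variable {n : ℕ} {W W' : Type} {M : KModel n W} {M' : KModel n W'} {s : W} {s' : W'}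

@[simp]
lemma sat_bigAnd {l : List (Formula n)} : Sat M s (bigAnd l) ↔ ∀ φ ∈ l, Sat M s φ := by
  induction l with
  | nil => simp [bigAnd, Sat]
  | cons a l ih => simp [bigAnd, Sat, ih]

@[simp]
lemma sat_bigOr {l : List (Formula n)} : Sat M s (bigOr l) ↔ ∃ φ ∈ l, Sat M s φ := by
  induction l with
  | nil => simp [bigOr, Sat]
  | cons a l ih => simp [bigOr, Sat, ih]

lemma sat_nabla_iff {B : {B : Finset (Fin n) // B.Nonempty}} {Φ : List (Formula n)} :
    Sat M s (nabla B Φ) ↔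
      (∀ t, M.RB B.1 s t → ∃ χ ∈ Φ, Sat M t χ) ∧ ∀ χ ∈ Φ, ∃ t, M.RB B.1 s t ∧ Sat M t χ := by
  simp [nabla, Sat]

lemma mem_V_iff_of_sat_minterm {P S : Finset ℕ} (h : Sat M s (minterm P S)) {q : ℕ} (hq : q ∈ P) :
    q ∈ M.V s ↔ q ∈ S := by
  rw [minterm, sat_bigAnd] at h
  have hlit := h _ (List.mem_map_of_mem (f := fun q =>
    if q ∈ S then Formula.atom (n := n) q else .neg (.atom q)) ((Finset.mem_sort _).2 hq))
  by_cases hqS : q ∈ S <;> simp_all [Sat]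

lemma sat_D_of_sat_nabla {B : {B : Finset (Fin n) // B.Nonempty}} {Φ : List (Formula n)}
    {ψ : Formula n} (h : Sat M s (nabla B Φ)) (h' : Sat M' s' (nabla B Φ))
    (hagree : ∀ χ ∈ Φ, ∀ t t', Sat M t χ → Sat M' t' χ → Sat M t ψ → Sat M' t' ψ)
    (hψ : Sat M s (.D B ψ)) : Sat M' s' (.D B ψ) := by
  intro t' ht'
  obtain ⟨χ, hχ, ht'χ⟩ := (sat_nabla_iff.1 h').1 t' ht'
  obtain ⟨t, ht, htχ⟩ := (sat_nabla_iff.1 h).2 χ hχ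
  exact hagree χ hχ t t' htχ ht'χ (hψ t ht)

end Semantics

lemma mem_of_mem_insertF {n : ℕ} {φ a : Formula n} {l : List (Formula n)}
    (h : a ∈ insertF φ l) : a = φ ∨ a ∈ l := by
  induction l with
  | nil => simpa [insertF] using h
  | cons b l ih =>
    rw [insertF] at h
    split_ifs at h
    · simpa using h
    · exact Or.inr h
    · rcases List.mem_cons.1 h with rfl | h
      · simp
      · simpa using (ih h).imp_right Or.inr

lemma mem_of_mem_normList {n : ℕ} {a : Formula n} {l : List (Formula n)}
    (h : a ∈ normList l) : a ∈ l := by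
  induction l with
  | nil => simp [normList] at h
  | cons b l ih => simpa using (mem_of_mem_insertF h).imp_right ih

lemma natToFinset_sum_two_pow {n : ℕ} (B : Finset (Fin n)) :
    natToFinset n (∑ i ∈ B, 2 ^ (i : ℕ)) = B := by
  have hsum : ∑ i ∈ B, 2 ^ (i : ℕ) = ∑ j ∈ B.map Fin.valEmbedding, 2 ^ j := by
    rw [Finset.sum_map]; rfl
  ext i
  rw [natToFinset, Finset.mem_filter, hsum, ← Nat.mem_bitIndices, ← List.mem_toFinset,
    Finset.toFinset_bitIndices_sum_two_pow]
  simp [Fin.val_inj]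

lemma mem_neSubsets {n : ℕ} (B : {B : Finset (Fin n) // B.Nonempty}) : B ∈ neSubsets n := by
  have hlt : ∑ i ∈ B.1, 2 ^ (i : ℕ) < 2 ^ n := by
    have := Nat.geomSum_lt (m := 2) (n := n) le_rfl (s := B.1.map Fin.valEmbedding) (by simp)
    rwa [Finset.sum_map] at this
  rw [neSubsets, List.mem_filterMap]
  exact ⟨B.1, List.mem_map.2 ⟨_, List.mem_range.2 hlt, natToFinset_sum_two_pow B.1⟩,
    by rw [dif_pos B.2]⟩

section Canonical

variable {n : ℕ} {W W' : Type} {M : KModel n W} {M' : KModel n W'} {s : W} {s' : W'}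
  {P : Finset ℕ}

lemma sat_minterm_of_sat_toFormula {k : ℕ} {d : CData n} (h : Sat M s (toFormula P k d)) :
    Sat M s (minterm P (d.S ∩ P)) := by
  cases k with
  | zero => exact h
  | succ k => exact h.1

lemma sat_nabla_of_sat_toFormula {k : ℕ} {d : CData n} (h : Sat M s (toFormula P (k + 1) d))
    (B : {B : Finset (Fin n) // B.Nonempty}) :
    Sat M s (nabla B (normList ((d.succ B.1).map (toFormula P k)))) :=
  sat_bigAnd.1 h.2 _ (List.mem_map_of_mem (mem_neSubsets B))

theorem sat_iff_of_sat_toFormula (φ : Formula n) {k : ℕ} {d : CData n}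
    (hdep : φ.depth ≤ k) (hatoms : φ.atoms ⊆ P)
    (h : Sat M s (toFormula P k d)) (h' : Sat M' s' (toFormula P k d)) :
    Sat M s φ ↔ Sat M' s' φ := by
  induction φ generalizing k d s s' W W' with
  | top | bot => simp [Sat]
  | atom q =>
    have hq : q ∈ P := hatoms (by simp [Formula.atoms])
    simp only [Sat]
    rw [mem_V_iff_of_sat_minterm (sat_minterm_of_sat_toFormula h) hq,
      mem_V_iff_of_sat_minterm (sat_minterm_of_sat_toFormula h') hq]
  | neg φ ih => exact not_congr (ih hdep hatoms h h')
  | and φ ψ ihφ ihψ =>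
    simp only [Formula.depth, max_le_iff] at hdep
    simp only [Formula.atoms, Finset.union_subset_iff] at hatoms
    exact and_congr (ihφ hdep.1 hatoms.1 h h') (ihψ hdep.2 hatoms.2 h h')
  | or φ ψ ihφ ihψ =>
    simp only [Formula.depth, max_le_iff] at hdep
    simp only [Formula.atoms, Finset.union_subset_iff] at hatoms
    exact or_congr (ihφ hdep.1 hatoms.1 h h') (ihψ hdep.2 hatoms.2 h h')
  | D B ψ ih =>
    obtain ⟨k, rfl⟩ : ∃ j, k = j + 1 := ⟨k - 1, by simp only [Formula.depth] at hdep; omega⟩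
    have hdψ : ψ.depth ≤ k := by simpa [Formula.depth] using hdep
    have hagree : ∀ {W W' : Type} {M : KModel n W} {M' : KModel n W'},
        ∀ χ ∈ normList ((d.succ B.1).map (toFormula P k)), ∀ (t : W) (t' : W'),
          Sat M t χ → Sat M' t' χ → Sat M t ψ → Sat M' t' ψ := by
      intro W W' M M' χ hχ t t' htχ ht'χ
      obtain ⟨c, -, rfl⟩ := List.mem_map.1 (mem_of_mem_normList hχ)
      exact (ih hdψ hatoms htχ ht'χ).1
    exact ⟨sat_D_of_sat_nabla (sat_nabla_of_sat_toFormula h B)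
        (sat_nabla_of_sat_toFormula h' B) hagree,
      sat_D_of_sat_nabla (sat_nabla_of_sat_toFormula h' B)
        (sat_nabla_of_sat_toFormula h B) hagree⟩

end Canonical

theorem canonical_dichotomy_general {n : ℕ} (L : MSys) (P : Finset ℕ) (k : ℕ)
    (δ : Formula n) (hδ : δ ∈ DP P k)
    (φ : Formula n) (hdep : φ.depth ≤ k) (hatoms : φ.atoms ⊆ P) :
    Entails L δ φ ∨ Entails L δ (Formula.neg φ) := by
  obtain ⟨d, rfl⟩ := hδ
  by_cases hφ : Entails L (toFormula P k d) φ
  · exact Or.inl hφ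
  · right
    obtain ⟨W₀, M₀, -, s₀, hδ₀, hφ₀⟩ : ∃ (W₀ : Type) (M₀ : KModel n W₀), IsModel L M₀ ∧
        ∃ s₀, Sat M₀ s₀ (toFormula P k d) ∧ ¬ Sat M₀ s₀ φ := by
      simpa [Entails] using hφ
    intro W M _ s hδ hφs
    exact hφ₀ ((sat_iff_of_sat_toFormula φ hdep hatoms hδ₀ hδ).2 hφs)

/-- dichotomy for d-canonical formulas. -/
theorem canonical_dichotomy {n : ℕ} (L : MSys) (P : Finset ℕ) (k : ℕ)
    (δ : Formula n) (hδ : δ ∈ DP P k) (hsat : SatL L δ)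
    (φ : Formula n) (hdep : φ.depth ≤ k) (hatoms : φ.atoms ⊆ P) :
    Entails L δ φ ∨ Entails L δ (Formula.neg φ) :=
  canonical_dichotomy_general L P k δ hδ φ hdep hatoms

end DKLogic
end
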